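/- The composition of the induced tamperings of bitwise independent functions through a linear code lands in the affine family: if F_BIT is the family of bitwise independent tampering functions on F₂ⁿ and (ECCenc, ECCdec_R) is as above, then the induced family G = { ECCdec_R ∘ f ∘ ECCenc : f ∈ F_BIT } is contained in the family of affine functions on F₂^m. -/

import Mathlib

/-!
Every bit operation is affine over `F₂` (`keep` and `flip` are translations, `set0` and `set1`
constants), so bitwise tampering of a codeword `𝐮G` is `𝐮 ↦ 𝐮 G D + 𝐜` with `D` diagonal,
and decoding is linear.
-/

inductive BitOp | keep | flip | set0 | set1
deriving DecidableEq

instance : Fintype BitOp :=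
  ⟨{BitOp.keep, BitOp.flip, BitOp.set0, BitOp.set1}, fun x => by cases x <;> simp⟩

def BitOp.apply : BitOp → ZMod 2 → ZMod 2
  | .keep, x => x
  | .flip, x => x + 1
  | .set0, _ => 0
  | .set1, _ => 1

namespace BitOp

def scale : BitOp → ZMod 2
  | keep | flip => 1
  | set0 | set1 => 0

def shift : BitOp → ZMod 2
  | keep | set0 => 0
  | flip | set1 => 1

theorem apply_eq_mul_add (b : BitOp) (x : ZMod 2) : b.apply x = x * b.scale + b.shift := by
  cases b <;> simp [apply, scale, shift]

theorem apply_vecMul_eq {κ ι : Type*} [Fintype κ] [Fintype ι] [DecidableEq ι]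
    (g : ι → BitOp) (A : Matrix κ ι (ZMod 2)) (u : κ → ZMod 2) :
    (fun i => (g i).apply (Matrix.vecMul u A i)) =
      Matrix.vecMul u (A * Matrix.diagonal (scale ∘ g)) + shift ∘ g := by
  funext i
  rw [← Matrix.vecMul_vecMul, Pi.add_apply, Matrix.vecMul_diagonal, apply_eq_mul_add]
  rfl

end BitOp

theorem stmt_11_general (m n : ℕ) (G : Matrix (Fin m) (Fin n) (ZMod 2))
    (R : Fin m ↪ Fin n) :
    ∀ f : Fin n → BitOp,
      ∃ (M : Matrix (Fin m) (Fin m) (ZMod 2)) (Δ : Fin m → ZMod 2),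
        ∀ u : Fin m → ZMod 2,
          Matrix.vecMul
            (fun i => (f (R i)).apply (Matrix.vecMul u G (R i)))
            (G.submatrix id R)⁻¹ = Matrix.vecMul u M + Δ := by
  intro f
  set A := G.submatrix id R
  refine ⟨A * Matrix.diagonal (BitOp.scale ∘ f ∘ R) * A⁻¹,
    Matrix.vecMul (BitOp.shift ∘ f ∘ R) A⁻¹, fun u => ?_⟩
  have tampered := BitOp.apply_vecMul_eq (f ∘ R) A u
  change (fun i => (f (R i)).apply (Matrix.vecMul u A i)) = _ at tampered
  rw [← Matrix.vecMul_vecMul, ← Matrix.add_vecMul, ← tampered]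
  rfl

/-- The family of tamperings induced by bitwise independent functions through
a linear code (encoder `𝐮 ↦ 𝐮G`, erasure decoder `𝐲 ↦ 𝐲_R G_R⁻¹`) is contained
in the family of affine functions on `F₂^m`. -/
theorem stmt_11 (m n : ℕ) (G : Matrix (Fin m) (Fin n) (ZMod 2))
    (R : Fin m ↪ Fin n)
    (hinv : IsUnit (G.submatrix id R)) :
    ∀ f : Fin n → BitOp,
      ∃ (M : Matrix (Fin m) (Fin m) (ZMod 2)) (Δ : Fin m → ZMod 2),
        ∀ u : Fin m → ZMod 2,
          Matrix.vecMul
            (fun i => (f (R i)).apply (Matrix.vecMul u G (R i)))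
            (G.submatrix id R)⁻¹ = Matrix.vecMul u M + Δ :=
  stmt_11_general m n G R
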